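/- arXiv:math/0411483 — 2 statements merged into one kernel-verified Lean document; each statement's English description precedes it below -/
import Mathlib

section
/- Let m > 0 and n ≥ 1. Let f : (ℝ^n ∖ {0}) × (-∞,0] → ℂ be continuous and quasi-homogeneous in the sense that f(sξ, s^m t) = s^{-m-n} f(ξ, t) for all s > 0, ξ ≠ 0, t ≤ 0, and assume f(·, t) is integrable near ξ = 0 for each t ≠ 0. Then ∫_{ℝ^n} f(ξ, -1) dξ = (1/m) ∫_{|ξ|=1} ∫_{-∞}^0 f(ξ, t) dt dS(ξ), both sides being absolutely convergent. -/
/-!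
In polar coordinates `ξ = r • η` the left side is `∫_{S} ∫_0^∞ f(rη, -1) r^{n-1} dr dS(η)`.
Quasi-homogeneity gives `f(rη, -1) r^{n-1} = r^{-m-1} f(η, -r^{-m})`, and the substitution
`t = -r^{-m}` turns the radial integral into `(1/m) ∫_{-∞}^0 f(η, t) dt`.
Absolute convergence on the left comes from integrability near `0` together with the decay
`‖f(ξ, -1)‖ ≤ C ‖ξ‖^{-m-n}` at infinity, which homogeneity reduces to the boundedness of `f`
on the compact set `S^{n-1} × [-1, 0]`; the same fibrewise identity for `‖f‖` then gives
absolute convergence on the right.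
-/

open MeasureTheory Set Metric

section NegRpowSubstitution

variable {G : Type*} [NormedAddCommGroup G] [NormedSpace ℝ G] {m : ℝ}

lemma hasDerivWithinAt_neg_rpow_neg {r : ℝ} (hr : r ∈ Ioi 0) :
    HasDerivWithinAt (fun r : ℝ => -r ^ (-m)) (m * r ^ (-m - 1)) (Ioi 0) r := by
  have h := ((Real.hasDerivAt_rpow_const (p := -m) (Or.inl hr.out.ne')).neg).hasDerivWithinAt
    (s := Ioi 0)
  rwa [neg_mul, neg_neg] at h

lemma injOn_neg_rpow_neg (hm : 0 < m) : InjOn (fun r : ℝ => -r ^ (-m)) (Ioi 0) :=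
  fun _ ha _ hb hab => Real.rpow_left_injOn (neg_ne_zero.2 hm.ne') (le_of_lt ha.out)
    (le_of_lt hb.out) (neg_inj.1 hab)

lemma image_neg_rpow_neg_Ioi (hm : 0 < m) : (fun r : ℝ => -r ^ (-m)) '' Ioi 0 = Iio 0 := by
  ext t
  simp only [mem_image, mem_Ioi, mem_Iio]
  constructor
  · rintro ⟨r, hr, rfl⟩
    simpa using Real.rpow_pos_of_pos hr (-m)
  · intro ht
    have hmt : 0 < -t := neg_pos.2 ht
    refine ⟨(-t) ^ (-m⁻¹), Real.rpow_pos_of_pos hmt _, ?_⟩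
    rw [← Real.rpow_mul hmt.le, neg_mul_neg, inv_mul_cancel₀ hm.ne', Real.rpow_one, neg_neg]

lemma abs_mul_rpow_neg_sub_one (hm : 0 < m) {r : ℝ} (hr : r ∈ Ioi 0) :
    |m * r ^ (-m - 1)| = m * r ^ (-m - 1) :=
  abs_of_pos (mul_pos hm (Real.rpow_pos_of_pos hr _))

theorem integrableOn_Iic_zero_iff_neg_rpow_neg (hm : 0 < m) (g : ℝ → G) :
    IntegrableOn g (Iic 0) ↔
      IntegrableOn (fun r => (m * r ^ (-m - 1)) • g (-r ^ (-m))) (Ioi 0) := by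
  rw [integrableOn_Iic_iff_integrableOn_Iio, ← image_neg_rpow_neg_Ioi hm,
    integrableOn_image_iff_integrableOn_abs_deriv_smul measurableSet_Ioi
      (fun _ => hasDerivWithinAt_neg_rpow_neg) (injOn_neg_rpow_neg hm)]
  exact integrableOn_congr_fun (fun r hr => by rw [abs_mul_rpow_neg_sub_one hm hr])
    measurableSet_Ioi

theorem integral_Iic_zero_eq_neg_rpow_neg (hm : 0 < m) (g : ℝ → G) :
    ∫ t in Iic 0, g t = ∫ r in Ioi 0, (m * r ^ (-m - 1)) • g (-r ^ (-m)) := by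
  rw [← setIntegral_congr_set Iio_ae_eq_Iic, ← image_neg_rpow_neg_Ioi hm,
    integral_image_eq_integral_abs_deriv_smul measurableSet_Ioi
      (fun _ => hasDerivWithinAt_neg_rpow_neg) (injOn_neg_rpow_neg hm)]
  exact setIntegral_congr_fun measurableSet_Ioi fun r hr => by
    rw [abs_mul_rpow_neg_sub_one hm hr]

end NegRpowSubstitution

section VolumeIoiPow

variable {G : Type*} [NormedAddCommGroup G] [NormedSpace ℝ G]

theorem integrable_volumeIoiPow_iff (k : ℕ) (h : ℝ → G) :
    Integrable (fun r : Ioi (0 : ℝ) => h r) (Measure.volumeIoiPow k) ↔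
      IntegrableOn (fun r => r ^ k • h r) (Ioi 0) := by
  rw [Measure.volumeIoiPow, integrable_withDensity_iff_integrable_smul'
      (measurable_subtype_coe.pow_const _).ennreal_ofReal
      (ae_of_all _ fun _ => ENNReal.ofReal_lt_top),
    integrableOn_iff_comap_subtypeVal measurableSet_Ioi]
  refine integrable_congr (ae_of_all _ fun r => ?_)
  simp [ENNReal.toReal_ofReal (pow_nonneg r.2.out.le _)]

theorem integral_volumeIoiPow (k : ℕ) (h : ℝ → G) :
    ∫ r : Ioi (0 : ℝ), h r ∂Measure.volumeIoiPow k = ∫ r in Ioi 0, r ^ k • h r := by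
  simp only [Measure.volumeIoiPow, ENNReal.ofReal]
  rw [integral_withDensity_eq_integral_smul (measurable_subtype_coe.pow_const _).real_toNNReal,
    integral_subtype_comap measurableSet_Ioi fun r => (r ^ k).toNNReal • h r]
  refine setIntegral_congr_fun measurableSet_Ioi fun r hr => ?_
  rw [NNReal.smul_def, Real.coe_toNNReal _ (pow_nonneg hr.out.le _)]

end VolumeIoiPow

theorem homeomorphUnitSphereProd_snd_smul_fst {E : Type*} [NormedAddCommGroup E]
    [NormedSpace ℝ E] (x : ({0}ᶜ : Set E)) :
    ((homeomorphUnitSphereProd E x).2 : ℝ) • ((homeomorphUnitSphereProd E x).1 : E) = x := by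
  simp [smul_inv_smul₀ (norm_ne_zero_iff.2 x.2)]

section Polar

variable {E G : Type*} [NormedAddCommGroup E] [NormedSpace ℝ E] [FiniteDimensional ℝ E]
  [MeasurableSpace E] [BorelSpace E] [Nontrivial E] (μ : Measure E) [μ.IsAddHaarMeasure]
  [NormedAddCommGroup G]

theorem integrable_iff_integrable_sphere_prod (g : E → G) :
    Integrable g μ ↔ Integrable (fun p : sphere (0 : E) 1 × Ioi (0 : ℝ) => g (p.2.1 • (p.1 : E)))
      (μ.toSphere.prod (Measure.volumeIoiPow (Module.finrank ℝ E - 1))) := by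
  rw [← μ.measurePreserving_homeomorphUnitSphereProd.integrable_comp_emb
      (Homeomorph.measurableEmbedding _), Function.comp_def]
  simp_rw [homeomorphUnitSphereProd_snd_smul_fst]
  simpa only [IntegrableOn, restrict_compl_singleton, Function.comp_def] using
    integrableOn_iff_comap_subtypeVal (f := g) (μ := μ) (measurableSet_singleton 0).compl

theorem integral_eq_integral_sphere_prod [NormedSpace ℝ G] (g : E → G) :
    ∫ x, g x ∂μ = ∫ p : sphere (0 : E) 1 × Ioi (0 : ℝ), g (p.2.1 • (p.1 : E))
      ∂(μ.toSphere.prod (Measure.volumeIoiPow (Module.finrank ℝ E - 1))) := by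
  rw [← μ.measurePreserving_homeomorphUnitSphereProd.integral_comp
      (Homeomorph.measurableEmbedding _)]
  simp_rw [homeomorphUnitSphereProd_snd_smul_fst]
  rw [integral_subtype_comap (measurableSet_singleton 0).compl, restrict_compl_singleton]

end Polar

section RadialSubstitution

variable {G : Type*} [NormedAddCommGroup G] [NormedSpace ℝ G] {m : ℝ} {d : ℕ} {g h : ℝ → G}

lemma eqOn_mul_rpow_neg_sub_one_smul (hd : 0 < d)
    (hgh : ∀ r : ℝ, 0 < r → g (-r ^ (-m)) = r ^ (m + d) • h r) :
    EqOn (fun r => (m * r ^ (-m - 1)) • g (-r ^ (-m))) (fun r => m • r ^ (d - 1) • h r)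
      (Ioi 0) := by
  intro r hr
  have hexp : -m - 1 + (m + d) = ((d - 1 : ℕ) : ℝ) := by rw [Nat.cast_pred hd]; ring
  dsimp only
  rw [hgh r hr, smul_smul, mul_assoc, ← Real.rpow_add hr, hexp, Real.rpow_natCast, mul_smul]

theorem integrableOn_Iic_zero_iff_integrable_volumeIoiPow (hm : 0 < m) (hd : 0 < d)
    (hgh : ∀ r : ℝ, 0 < r → g (-r ^ (-m)) = r ^ (m + d) • h r) :
    IntegrableOn g (Iic 0) ↔
      Integrable (fun r : Ioi (0 : ℝ) => h r) (Measure.volumeIoiPow (d - 1)) := by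
  rw [integrableOn_Iic_zero_iff_neg_rpow_neg hm, integrable_volumeIoiPow_iff,
    integrableOn_congr_fun (eqOn_mul_rpow_neg_sub_one_smul hd hgh) measurableSet_Ioi]
  exact integrable_smul_iff hm.ne' (fun r => r ^ (d - 1) • h r)

theorem integral_Iic_zero_eq_smul_integral_volumeIoiPow (hm : 0 < m) (hd : 0 < d)
    (hgh : ∀ r : ℝ, 0 < r → g (-r ^ (-m)) = r ^ (m + d) • h r) :
    ∫ t in Iic 0, g t = m • ∫ r : Ioi (0 : ℝ), h r ∂Measure.volumeIoiPow (d - 1) := by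
  rw [integral_Iic_zero_eq_neg_rpow_neg hm, integral_volumeIoiPow,
    setIntegral_congr_fun measurableSet_Ioi (eqOn_mul_rpow_neg_sub_one_smul hd hgh), integral_smul]

end RadialSubstitution

section Decay

variable {E G : Type*} [NormedAddCommGroup E] [NormedSpace ℝ E] [FiniteDimensional ℝ E]
  [MeasurableSpace E] [BorelSpace E] {μ : Measure E} [μ.IsAddHaarMeasure]
  [NormedAddCommGroup G]

lemma rpow_neg_le_two_rpow_mul_one_add_rpow_neg {s α : ℝ} (hs : 1 ≤ s) (hα : 0 ≤ α) :
    s ^ (-α) ≤ 2 ^ α * (1 + s) ^ (-α) := by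
  have hs0 : 0 < s := one_pos.trans_le hs
  calc s ^ (-α) = 2 ^ α * (2 * s) ^ (-α) := by
        rw [Real.mul_rpow zero_le_two hs0.le, ← mul_assoc, ← Real.rpow_add two_pos, add_neg_cancel,
          Real.rpow_zero, one_mul]
    _ ≤ 2 ^ α * (1 + s) ^ (-α) := by
        gcongr 2 ^ α * ?_
        exact Real.rpow_le_rpow_of_nonpos (by positivity) (by linarith) (neg_nonpos.2 hα)

theorem integrable_of_integrableOn_ball_of_norm_le_rpow {f : E → G} {C α : ℝ}
    (hα : Module.finrank ℝ E < α) (hball : IntegrableOn f (ball 0 1) μ)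
    (h_meas : AEStronglyMeasurable f μ) (h_decay : ∀ x, 1 ≤ ‖x‖ → ‖f x‖ ≤ C * ‖x‖ ^ (-α)) :
    Integrable f μ := by
  have hα0 : 0 ≤ α := (Nat.cast_nonneg _).trans hα.le
  have hdom : Integrable (fun x : E => C * 2 ^ α * (1 + ‖x‖) ^ (-α)) μ :=
    (integrable_one_add_norm hα).const_mul _
  have hcompl : IntegrableOn f (ball 0 1)ᶜ μ := by
    refine hdom.integrableOn.mono' h_meas.restrict <|
      (ae_restrict_iff' measurableSet_ball.compl).2 (ae_of_all _ fun x hx => ?_)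
    have hx : 1 ≤ ‖x‖ := by simpa using hx
    have hC : 0 ≤ C := nonneg_of_mul_nonneg_left ((norm_nonneg _).trans (h_decay x hx))
      (Real.rpow_pos_of_pos (one_pos.trans_le hx) _)
    calc ‖f x‖ ≤ C * ‖x‖ ^ (-α) := h_decay x hx
      _ ≤ C * (2 ^ α * (1 + ‖x‖) ^ (-α)) := by
        gcongr; exact rpow_neg_le_two_rpow_mul_one_add_rpow_neg hx hα0
      _ = C * 2 ^ α * (1 + ‖x‖) ^ (-α) := by ring
  simpa using hball.union hcompl

end Decay

section QuasiHomogeneous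

variable {E G : Type*} [NormedAddCommGroup E] [NormedSpace ℝ E]
  [NormedAddCommGroup G] [NormedSpace ℝ G]

def IsQuasiHomogeneous (m : ℝ) (f : E → ℝ → G) : Prop :=
  ∀ s : ℝ, 0 < s → ∀ ξ : E, ξ ≠ 0 → ∀ t : ℝ, t ≤ 0 →
    f (s • ξ) (s ^ m * t) = s ^ (-m - Module.finrank ℝ E) • f ξ t

namespace IsQuasiHomogeneous

variable {m : ℝ} {f : E → ℝ → G}

theorem norm (hf : IsQuasiHomogeneous m f) : IsQuasiHomogeneous m fun ξ t => ‖f ξ t‖ :=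
  fun s hs ξ hξ t ht => by
    dsimp only
    rw [hf s hs ξ hξ t ht, norm_smul, Real.norm_of_nonneg (Real.rpow_nonneg hs.le _), smul_eq_mul]

theorem apply_smul_neg_one (hf : IsQuasiHomogeneous m f) {ξ : E} (hξ : ξ ≠ 0) {r : ℝ}
    (hr : 0 < r) : f (r • ξ) (-1) = r ^ (-(m + Module.finrank ℝ E)) • f ξ (-r ^ (-m)) := by
  have hrm : r ^ m * -r ^ (-m) = -1 := by
    rw [mul_neg, ← Real.rpow_add hr, add_neg_cancel, Real.rpow_zero]
  rw [← hrm, hf r hr ξ hξ _ (neg_nonpos.2 (Real.rpow_nonneg hr.le _)), neg_add']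

theorem apply_neg_rpow_neg (hf : IsQuasiHomogeneous m f) {ξ : E} (hξ : ξ ≠ 0) {r : ℝ}
    (hr : 0 < r) : f ξ (-r ^ (-m)) = r ^ (m + Module.finrank ℝ E) • f (r • ξ) (-1) := by
  rw [hf.apply_smul_neg_one hξ hr, smul_smul, ← Real.rpow_add hr, add_neg_cancel,
    Real.rpow_zero, one_smul]

variable [FiniteDimensional ℝ E]

theorem exists_norm_le_rpow_neg (hm : 0 < m) (hf : IsQuasiHomogeneous m f)
    (hcont : ContinuousOn (fun p : E × ℝ => f p.1 p.2) ({ξ : E | ξ ≠ 0} ×ˢ Iic 0)) :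
    ∃ C, ∀ ξ : E, 1 ≤ ‖ξ‖ → ‖f ξ (-1)‖ ≤ C * ‖ξ‖ ^ (-(m + Module.finrank ℝ E)) := by
  obtain ⟨C, hC⟩ := ((isCompact_sphere (0 : E) 1).prod (isCompact_Icc (a := -1) (b := 0)))
    |>.exists_bound_of_continuousOn <| hcont.mono <|
      prod_mono (fun _ hξ => ne_of_mem_sphere hξ one_ne_zero) fun _ ht => ht.2
  refine ⟨C, fun ξ hξ => ?_⟩
  set s := ‖ξ‖
  have hs : 0 < s := one_pos.trans_le hξ
  have hη : s⁻¹ • ξ ∈ sphere (0 : E) 1 := by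
    rw [mem_sphere_zero_iff_norm, norm_smul, norm_inv, norm_norm, inv_mul_cancel₀ hs.ne']
  have ht : -s ^ (-m) ∈ Icc (-1 : ℝ) 0 :=
    ⟨neg_le_neg (Real.rpow_le_one_of_one_le_of_nonpos hξ (neg_nonpos.2 hm.le)),
      neg_nonpos.2 (Real.rpow_nonneg hs.le _)⟩
  calc ‖f ξ (-1)‖ = s ^ (-(m + Module.finrank ℝ E)) * ‖f (s⁻¹ • ξ) (-s ^ (-m))‖ := by
        rw [← smul_eq_mul, ← hf.norm.apply_smul_neg_one (ne_of_mem_sphere hη one_ne_zero) hs,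
          smul_inv_smul₀ hs.ne']
    _ ≤ s ^ (-(m + Module.finrank ℝ E)) * C := by gcongr; exact hC (_, _) ⟨hη, ht⟩
    _ = C * s ^ (-(m + Module.finrank ℝ E)) := mul_comm _ _

variable [Nontrivial E]

theorem integrableOn_Iic_iff (hm : 0 < m) (hf : IsQuasiHomogeneous m f) {ξ : E} (hξ : ξ ≠ 0) :
    IntegrableOn (f ξ) (Iic 0) ↔
      Integrable (fun r : Ioi (0 : ℝ) => f (r.1 • ξ) (-1))
        (Measure.volumeIoiPow (Module.finrank ℝ E - 1)) :=
  integrableOn_Iic_zero_iff_integrable_volumeIoiPow (h := fun r => f (r • ξ) (-1)) hm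
    Module.finrank_pos fun _ hr => hf.apply_neg_rpow_neg hξ hr

theorem integral_Iic (hm : 0 < m) (hf : IsQuasiHomogeneous m f) {ξ : E} (hξ : ξ ≠ 0) :
    ∫ t in Iic 0, f ξ t =
      m • ∫ r : Ioi (0 : ℝ), f (r.1 • ξ) (-1) ∂Measure.volumeIoiPow (Module.finrank ℝ E - 1) :=
  integral_Iic_zero_eq_smul_integral_volumeIoiPow (h := fun r => f (r • ξ) (-1)) hm
    Module.finrank_pos fun _ hr => hf.apply_neg_rpow_neg hξ hr

variable [MeasurableSpace E] [BorelSpace E] {μ : Measure E} [μ.IsAddHaarMeasure]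

theorem integrable_neg_one (hm : 0 < m) (hf : IsQuasiHomogeneous m f)
    (hcont : ContinuousOn (fun p : E × ℝ => f p.1 p.2) ({ξ : E | ξ ≠ 0} ×ˢ Iic 0))
    (hball : IntegrableOn (fun ξ => f ξ (-1)) (ball 0 1) μ) :
    Integrable (fun ξ => f ξ (-1)) μ := by
  obtain ⟨C, hC⟩ := hf.exists_norm_le_rpow_neg hm hcont
  have hcont' : ContinuousOn (fun ξ => f ξ (-1)) {0}ᶜ :=
    hcont.comp (Continuous.prodMk_left (-1 : ℝ)).continuousOn fun ξ hξ => ⟨hξ, by norm_num⟩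
  have h_meas : AEStronglyMeasurable (fun ξ => f ξ (-1)) μ := by
    simpa using hcont'.aestronglyMeasurable (μ := μ) (measurableSet_singleton 0).compl
  exact integrable_of_integrableOn_ball_of_norm_le_rpow (by linarith) hball h_meas hC

theorem integrable_sphere_prod_Iic (hm : 0 < m) (hf : IsQuasiHomogeneous m f)
    (hcont : ContinuousOn (fun p : E × ℝ => f p.1 p.2) ({ξ : E | ξ ≠ 0} ×ˢ Iic 0))
    (hF : Integrable (fun ξ => f ξ (-1)) μ) :
    Integrable (fun p : sphere (0 : E) 1 × ℝ => f p.1 p.2)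
      (μ.toSphere.prod (volume.restrict (Iic 0))) := by
  have hpolar := (integrable_iff_integrable_sphere_prod μ _).1 hF
  obtain ⟨h_fiber, h_norm⟩ := (integrable_prod_iff hpolar.1).1 hpolar
  have h_meas : AEStronglyMeasurable (fun p : sphere (0 : E) 1 × ℝ => f p.1 p.2)
      (μ.toSphere.prod (volume.restrict (Iic 0))) := by
    have hc : ContinuousOn (fun p : sphere (0 : E) 1 × ℝ => f p.1 p.2) (univ ×ˢ Iic 0) :=
      hcont.comp (continuous_subtype_val.prodMap continuous_id).continuousOn
        fun p hp => ⟨ne_of_mem_sphere p.1.2 one_ne_zero, hp.2⟩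
    have h := hc.aestronglyMeasurable (μ := μ.toSphere.prod volume)
      (MeasurableSet.univ.prod measurableSet_Iic)
    rwa [← Measure.prod_restrict, Measure.restrict_univ] at h
  have hη : ∀ η : sphere (0 : E) 1, (η : E) ≠ 0 := fun η => ne_of_mem_sphere η.2 one_ne_zero
  refine (integrable_prod_iff h_meas).2
    ⟨h_fiber.mono fun η h => (hf.integrableOn_Iic_iff hm (hη η)).2 h,
      (h_norm.const_mul m).congr (ae_of_all _ fun η => ?_)⟩
  exact (hf.norm.integral_Iic hm (hη η)).symm

theorem integral_neg_one (hm : 0 < m) (hf : IsQuasiHomogeneous m f)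
    (hF : Integrable (fun ξ => f ξ (-1)) μ) :
    ∫ ξ, f ξ (-1) ∂μ = m⁻¹ • ∫ η : sphere (0 : E) 1, (∫ t in Iic 0, f η t) ∂μ.toSphere := by
  have hpolar := (integrable_iff_integrable_sphere_prod μ _).1 hF
  rw [integral_eq_integral_sphere_prod, integral_prod _ hpolar, ← integral_smul]
  refine integral_congr_ae (ae_of_all _ fun η => ?_)
  dsimp only
  rw [hf.integral_Iic hm (ne_of_mem_sphere η.2 one_ne_zero), inv_smul_smul₀ hm.ne']

end IsQuasiHomogeneous

end QuasiHomogeneous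

/-- Polar coordinates formula for quasi-homogeneous functions: if
`f(sξ, s^m t) = s^{-m-n} f(ξ, t)` for `s > 0`, `f` is continuous on
`(ℝⁿ∖{0}) × (-∞,0]` and integrable near `ξ = 0` for each `t ≠ 0`, then
`∫_{ℝⁿ} f(ξ,-1) dξ = (1/m) ∫_{|ξ|=1} ∫_{-∞}^0 f(ξ,t) dt dS(ξ)`,
both sides being absolutely convergent. -/
theorem quasi_homogeneous_polar_integral
    (n : ℕ) (hn : 1 ≤ n) (m : ℝ) (hm : 0 < m)
    (f : EuclideanSpace ℝ (Fin n) → ℝ → ℂ)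
    (hcont : ContinuousOn (fun p : EuclideanSpace ℝ (Fin n) × ℝ => f p.1 p.2)
      ({ξ : EuclideanSpace ℝ (Fin n) | ξ ≠ 0} ×ˢ Iic (0:ℝ)))
    (hhom : ∀ s : ℝ, 0 < s → ∀ ξ : EuclideanSpace ℝ (Fin n), ξ ≠ 0 → ∀ t : ℝ, t ≤ 0 →
      f (s • ξ) (s ^ m * t) = ((s ^ (-m - (n:ℝ)) : ℝ) : ℂ) * f ξ t)
    (hint : ∀ t : ℝ, t < 0 → IntegrableOn (fun ξ => f ξ t) (ball (0 : EuclideanSpace ℝ (Fin n)) 1)) :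
    Integrable (fun ξ => f ξ (-1)) ∧
    Integrable (fun p : sphere (0 : EuclideanSpace ℝ (Fin n)) 1 × ℝ => f (p.1 : EuclideanSpace ℝ (Fin n)) p.2)
      (((volume : Measure (EuclideanSpace ℝ (Fin n))).toSphere).prod (volume.restrict (Iic 0))) ∧
    (∫ ξ, f ξ (-1)) = (1 / (m : ℂ)) *
      ∫ ξ : sphere (0 : EuclideanSpace ℝ (Fin n)) 1,
        (∫ t in Iic (0:ℝ), f (ξ : EuclideanSpace ℝ (Fin n)) t)
        ∂((volume : Measure (EuclideanSpace ℝ (Fin n))).toSphere) := by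
  have : Nontrivial (EuclideanSpace ℝ (Fin n)) :=
    Module.nontrivial_of_finrank_pos (R := ℝ) (by rwa [finrank_euclideanSpace_fin])
  have hf : IsQuasiHomogeneous m f := fun s hs ξ hξ t ht => by
    rw [hhom s hs ξ hξ t ht, finrank_euclideanSpace_fin, Complex.real_smul]
  have hF := hf.integrable_neg_one hm hcont (hint (-1) (by norm_num))
  refine ⟨hF, hf.integrable_sphere_prod_Iic hm hcont hF, ?_⟩
  rw [hf.integral_neg_one hm hF, Complex.real_smul, Complex.ofReal_inv, one_div]
end

section
/- Let p : ℝ → ℂ be a function with |p(x)| ≤ A(1+|x|)^{m-1} for some A > 0 and integer m ≥ 1, and let q(x) be a polynomial-type positive function with q(x) ≥ c(1+|x|)^m, c > 0. Then for every λ ≤ 0, sup_{x ∈ ℝ} |p(x)| / (q(x) + |λ|) ≤ C (1 + |λ|^{1/m})^{-1} for a constant C depending only on A, c, m. -/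
/-! With `t = 1 + |x|` and `μ = |λ|^{1/m}`, the lower bound on `q` gives
`q x + |λ| ≥ min c 1 · (t^m + μ^m)`, while `t^{m-1}(1 + μ) ≤ 2 (t^m + μ^m)` because
`t^{m-1} ≤ t^m` (as `t ≥ 1`) and `t^{m-1} μ ≤ max t μ ^ m`. Hence `C = 2A / min c 1` works. -/

lemma pow_mul_le_pow_succ_add_pow_succ {t μ : ℝ} (ht : 0 ≤ t) (hμ : 0 ≤ μ) (n : ℕ) :
    t ^ n * μ ≤ t ^ (n + 1) + μ ^ (n + 1) := by
  rcases le_total μ t with h | h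
  · calc t ^ n * μ ≤ t ^ n * t := by gcongr
      _ ≤ t ^ (n + 1) + μ ^ (n + 1) := by rw [← pow_succ]; linarith [pow_nonneg hμ (n + 1)]
  · calc t ^ n * μ ≤ μ ^ n * μ := by gcongr
      _ ≤ t ^ (n + 1) + μ ^ (n + 1) := by rw [← pow_succ]; linarith [pow_nonneg ht (n + 1)]

lemma pow_mul_one_add_le_two_mul {t μ : ℝ} (ht : 1 ≤ t) (hμ : 0 ≤ μ) (n : ℕ) :
    t ^ n * (1 + μ) ≤ 2 * (t ^ (n + 1) + μ ^ (n + 1)) := by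
  have hpow : t ^ n ≤ t ^ (n + 1) := pow_le_pow_right₀ ht n.le_succ
  have hmix := pow_mul_le_pow_succ_add_pow_succ (zero_le_one.trans ht) hμ n
  nlinarith [pow_nonneg hμ (n + 1)]

/-- If `|p(x)| ≤ A(1+|x|)^{m-1}` and `q(x) ≥ c(1+|x|)^m`, then for every `λ ≤ 0`,
`sup_x |p(x)|/(q(x)+|λ|) ≤ C (1+|λ|^{1/m})⁻¹` with `C` depending only on `A`, `c`, `m`. -/
theorem normal_order_resolvent_decay (m : ℕ) (hm : 1 ≤ m) (A c : ℝ)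
    (hA : 0 < A) (hc : 0 < c) :
    ∃ C : ℝ, 0 < C ∧ ∀ p : ℝ → ℂ, ∀ q : ℝ → ℝ,
      (∀ x : ℝ, ‖p x‖ ≤ A * (1 + |x|) ^ (m - 1)) →
      (∀ x : ℝ, c * (1 + |x|) ^ m ≤ q x) →
      ∀ l : ℝ, l ≤ 0 → ∀ x : ℝ,
        ‖p x‖ / (q x + |l|) ≤ C * (1 + |l| ^ ((m : ℝ))⁻¹)⁻¹ := by
  have hκ : 0 < min c 1 := lt_min hc one_pos
  refine ⟨2 * A / min c 1, by positivity, fun p q hp hq l _ x => ?_⟩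
  obtain ⟨n, rfl⟩ : ∃ n, m = n + 1 := ⟨m - 1, by omega⟩
  set t := 1 + |x|
  set μ := |l| ^ ((↑(n + 1) : ℝ))⁻¹
  have ht : 1 ≤ t := le_add_of_nonneg_right (abs_nonneg x)
  have hμ : 0 ≤ μ := by positivity
  have hμpow : μ ^ (n + 1) = |l| := Real.rpow_inv_natCast_pow (abs_nonneg l) n.succ_ne_zero
  have hden : min c 1 * (t ^ (n + 1) + μ ^ (n + 1)) ≤ q x + |l| := by
    have hq' : min c 1 * t ^ (n + 1) ≤ q x :=
      (mul_le_mul_of_nonneg_right (min_le_left c 1) (by positivity)).trans (hq x)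
    have hl' : min c 1 * |l| ≤ |l| := mul_le_of_le_one_left (abs_nonneg l) (min_le_right c 1)
    rw [mul_add, hμpow]
    linarith
  have hnum : ‖p x‖ * (1 + μ) ≤ 2 * A * (t ^ (n + 1) + μ ^ (n + 1)) := by
    calc ‖p x‖ * (1 + μ) ≤ A * t ^ n * (1 + μ) := by gcongr; simpa using hp x
      _ = A * (t ^ n * (1 + μ)) := mul_assoc _ _ _
      _ ≤ A * (2 * (t ^ (n + 1) + μ ^ (n + 1))) :=
          mul_le_mul_of_nonneg_left (pow_mul_one_add_le_two_mul ht hμ n) hA.le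
      _ = 2 * A * (t ^ (n + 1) + μ ^ (n + 1)) := by ring
  have hpos : 0 < q x + |l| := (mul_pos hκ (by positivity)).trans_le hden
  rw [← div_eq_mul_inv, div_le_div_iff₀ hpos (by positivity)]
  calc ‖p x‖ * (1 + μ) ≤ 2 * A / min c 1 * (min c 1 * (t ^ (n + 1) + μ ^ (n + 1))) := by
        rwa [← mul_assoc, div_mul_cancel₀ _ hκ.ne']
    _ ≤ 2 * A / min c 1 * (q x + |l|) := by gcongr
end
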